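/- Define on rooted trees the products T ◁ T' = Σ_{l ∈ leaves(T)} T ↶_l T' (with ∅ ◁ T' = T'), extended bilinearly. Then ◁ is left pre-Lie: (t₁ ◁ t₂) ◁ t₃ − t₁ ◁ (t₂ ◁ t₃) = (t₁ ◁ t₃) ◁ t₂ − t₁ ◁ (t₃ ◁ t₂) for all trees t₁, t₂, t₃. -/

import Mathlib

inductive RTree (Ω : Type) : Type where
  | node : Ω → List (RTree Ω) → RTree Ω
abbrev RForest (Ω : Type) := List (RTree Ω)
abbrev FV (Ω : Type) := RForest Ω →₀ ℚ

mutual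
/-- The list of addresses of the leaves of a rooted tree. -/
def leafPaths {Ω : Type} : RTree Ω → List (List ℕ)
  | RTree.node _ [] => [[]]
  | RTree.node _ (t :: ts) => leafPathsF 0 (t :: ts)
/-- Leaf addresses of the trees of a forest, children indexed from `i`. -/
def leafPathsF {Ω : Type} : ℕ → RForest Ω → List (List ℕ)
  | _, [] => []
  | i, t :: ts => (leafPaths t).map (fun p => i :: p) ++ leafPathsF (i + 1) ts
end

def graftAtF {Ω : Type} (g : RForest Ω) : RTree Ω → List ℕ → RTree Ω
  | RTree.node a ts, [] => RTree.node a (ts ++ g)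
  | RTree.node a ts, i :: p =>
      RTree.node a (ts.mapIdx fun j s => if j = i then graftAtF g s p else s)

/-- `T ◁ T'` on basis trees (trees are forests with at most one component):
`∅ ◁ T' = T'`, and for a nonempty tree, the sum over the leaves of the
graftings of `T'` at that leaf. -/
noncomputable def lhd {Ω : Type} (F G : RForest Ω) : FV Ω :=
  match F with
  | [] => Finsupp.single G 1
  | [t] => ((leafPaths t).map (fun p => Finsupp.single [graftAtF G t p] (1 : ℚ))).sum
  | _ => 0

/-- The bilinear extension of `◁`. -/
noncomputable def Lhd {Ω : Type} : FV Ω →ₗ[ℚ] FV Ω →ₗ[ℚ] FV Ω :=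
  (Finsupp.lift (FV Ω →ₗ[ℚ] FV Ω) ℚ (RForest Ω))
    (fun F => (Finsupp.lift (FV Ω) ℚ (RForest Ω)) (lhd F))

def IsTree {Ω : Type} (F : RForest Ω) : Prop := F.length ≤ 1

namespace PreLieAux
variable {Ω : Type}

def rootPaths (F : RForest Ω) : List (List ℕ) :=
  match F with
  | [] => [[]]
  | t :: ts => leafPathsF 0 (t :: ts)

def gF (g : RForest Ω) : RForest Ω → ℕ → ℕ → List ℕ → RForest Ω
  | [], _, _, _ => []
  | t :: ts, i, j, q => if j = i then graftAtF g t q :: ts else t :: gF g ts (i+1) j q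

def fgraft (H G : RForest Ω) : List ℕ → RForest Ω
  | [] => G ++ H
  | i :: r => G.mapIdx (fun j s => if j = i then graftAtF H s r else s)

lemma mapIdx_id (ts : RForest Ω) : (List.mapIdx (fun _ s => s) ts) = ts := by
  induction ts with
  | nil => simp
  | cons t ts ih => rw [List.mapIdx_cons]; exact congrArg _ ih

lemma mapIdx_eq_gF (g : RForest Ω) (q : List ℕ) :
    ∀ (ts : RForest Ω) (i j : ℕ),
      (ts.mapIdx fun k s => if k + i = j then graftAtF g s q else s) = gF g ts i j q := by
  intro ts
  induction ts with
  | nil => intro i j; simp [gF]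
  | cons t ts ih =>
    intro i j
    rw [List.mapIdx_cons]
    by_cases h : j = i
    · rw [gF, if_pos h]
      have h1 : (fun k (s : RTree Ω) => if k + 1 + i = j then graftAtF g s q else s)
          = (fun _ s => s) := by
        funext k s; rw [if_neg (by omega)]
      rw [h1, mapIdx_id, if_pos (by omega : 0 + i = j)]
    · rw [gF, if_neg h]
      have h1 : (fun k (s : RTree Ω) => if k + 1 + i = j then graftAtF g s q else s)
          = (fun k s => if k + (i + 1) = j then graftAtF g s q else s) := by
        funext k s; rw [show k + 1 + i = k + (i + 1) by omega]
      rw [h1, ih, if_neg (by omega : ¬ 0 + i = j)]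

lemma graft_cons (g : RForest Ω) (a : Ω) (ts : RForest Ω) (j : ℕ) (q : List ℕ) :
    graftAtF g (RTree.node a ts) (j :: q) = RTree.node a (gF g ts 0 j q) := by
  rw [graftAtF, ← mapIdx_eq_gF g q ts 0 j]
  simp

lemma leafPaths_node (a : Ω) (F : RForest Ω) : leafPaths (RTree.node a F) = rootPaths F := by
  cases F <;> rfl

lemma head_bound : ∀ (ts : RForest Ω) (i : ℕ) (p : List ℕ), p ∈ leafPathsF i ts →
    ∃ j q, p = j :: q ∧ i ≤ j := by
  intro ts
  induction ts with
  | nil => intro i p hp; simp [leafPathsF] at hp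
  | cons t ts ih =>
    intro i p hp
    rw [leafPathsF, List.mem_append, List.mem_map] at hp
    rcases hp with ⟨q, _, rfl⟩ | hp
    · exact ⟨i, q, rfl, le_refl i⟩
    · obtain ⟨j, q, rfl, hj⟩ := ih (i+1) p hp
      exact ⟨j, q, rfl, by omega⟩

lemma mem_leafPathsF_cons {t : RTree Ω} {ts : RForest Ω} {i : ℕ} {p : List ℕ} :
    p ∈ leafPathsF i (t :: ts) ↔ (∃ q ∈ leafPaths t, p = i :: q) ∨ p ∈ leafPathsF (i+1) ts := by
  rw [leafPathsF, List.mem_append, List.mem_map]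
  aesop


lemma bind_of_ne (l : List (List ℕ)) (p : List ℕ) (X : List (List ℕ))
    (h : ∀ r ∈ l, r ≠ p) :
    (l.flatMap fun r => if r = p then X else [r]) = l := by
  induction l with
  | nil => rfl
  | cons a l ih =>
    rw [List.flatMap_cons, if_neg (h a (by simp)), ih (fun r hr => h r (by simp [hr]))]
    rfl

def RepB (g : RForest Ω) (p : List ℕ) : List ℕ → List (List ℕ) :=
  fun q => if q = p then (rootPaths g).map (p ++ ·) else [q]

lemma L1F (g : RForest Ω) (ts : RForest Ω)
    (IH : ∀ t ∈ ts, ∀ p ∈ leafPaths t,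
        leafPaths (graftAtF g t p) = (leafPaths t).flatMap (RepB g p)) :
    ∀ (i j : ℕ) (q : List ℕ), (j :: q) ∈ leafPathsF i ts →
      leafPathsF i (gF g ts i j q) = (leafPathsF i ts).flatMap (RepB g (j :: q)) := by
  induction ts with
  | nil => intro i j q h; simp [leafPathsF] at h
  | cons t ts ih =>
    intro i j q hmem
    have IHtail : ∀ t' ∈ ts, ∀ p ∈ leafPaths t',
        leafPaths (graftAtF g t' p) = (leafPaths t').flatMap (RepB g p) :=
      fun t' ht' => IH t' (by simp [ht'])
    by_cases hj : j = i
    · subst hj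
      have hq : q ∈ leafPaths t := by
        rcases mem_leafPathsF_cons.1 hmem with ⟨q', hq', he⟩ | h
        · cases he; exact hq'
        · obtain ⟨j', q', he, hb⟩ := head_bound ts (j+1) _ h
          cases he; omega
      rw [gF, if_pos rfl, leafPathsF, leafPathsF, List.flatMap_append,
        IH t (by simp) q hq, List.map_flatMap, List.flatMap_map]
      congr 1
      · apply List.flatMap_congr
        intro r _
        by_cases hr : r = q
        · subst hr
          rw [RepB, RepB, if_pos rfl, if_pos rfl, List.map_map]
          rfl
        · rw [RepB, RepB, if_neg hr, if_neg (by simp [hr])]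
          rfl
      · rw [show (RepB g (j :: q)) = (fun r => if r = j :: q then (rootPaths g).map ((j :: q) ++ ·) else [r]) from rfl,
          bind_of_ne]
        intro r hr
        obtain ⟨j', q', he, hb⟩ := head_bound ts (j+1) r hr
        subst he
        intro hcon
        cases hcon; omega
    · have hmem' : (j :: q) ∈ leafPathsF (i+1) ts := by
        rcases mem_leafPathsF_cons.1 hmem with ⟨q', _, he⟩ | h
        · cases he; omega
        · exact h
      rw [gF, if_neg hj, leafPathsF, leafPathsF, List.flatMap_append, ih IHtail (i+1) j q hmem']
      congr 1
      rw [List.flatMap_map, List.map_eq_flatMap]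
      exact List.flatMap_congr fun a _ => by
        unfold RepB
        rw [if_neg (by intro hcon; cases hcon; omega)]

lemma gF_cons (g : RForest Ω) (c : RTree Ω) (cs : RForest Ω) (i j : ℕ) (q : List ℕ) :
    ∃ d ds, gF g (c :: cs) i j q = d :: ds := by
  rw [gF]
  split
  · exact ⟨_, _, rfl⟩
  · exact ⟨_, _, rfl⟩

theorem L1T (g : RForest Ω) : ∀ (t : RTree Ω), ∀ p ∈ leafPaths t,
    leafPaths (graftAtF g t p) = (leafPaths t).flatMap (RepB g p)
  | RTree.node a [] => by
    intro p hp
    rw [leafPaths] at hp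
    simp at hp
    subst hp
    rw [graftAtF, leafPaths, leafPaths_node]
    show rootPaths (([] : RForest Ω) ++ g) = [[]].flatMap (RepB g [])
    rw [List.nil_append]
    simp [RepB]
  | RTree.node a (c :: cs) => by
    intro p hp
    rw [leafPaths] at hp
    obtain ⟨j, q, rfl, -⟩ := head_bound (c :: cs) 0 p hp
    obtain ⟨d, ds, hd⟩ := gF_cons g c cs 0 j q
    rw [graft_cons, leafPaths_node, leafPaths, hd, rootPaths, ← hd]
    exact L1F g (c :: cs) (fun t ht => L1T g t) 0 j q hp
termination_by t => sizeOf t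
decreasing_by
  have := List.sizeOf_lt_of_mem ht
  simp_wf
  simp only [List.cons.sizeOf_spec] at this
  omega


lemma mem_head {t : RTree Ω} {ts : RForest Ω} {i : ℕ} {q : List ℕ}
    (h : (i :: q) ∈ leafPathsF i (t :: ts)) : q ∈ leafPaths t := by
  rcases mem_leafPathsF_cons.1 h with ⟨q', hq', he⟩ | h
  · cases he; exact hq'
  · obtain ⟨j', q', he, hb⟩ := head_bound ts (i+1) _ h
    cases he; omega

lemma mem_tail {t : RTree Ω} {ts : RForest Ω} {i j : ℕ} {q : List ℕ} (hj : j ≠ i)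
    (h : (j :: q) ∈ leafPathsF i (t :: ts)) : (j :: q) ∈ leafPathsF (i+1) ts := by
  rcases mem_leafPathsF_cons.1 h with ⟨q', _, he⟩ | h
  · cases he; omega
  · exact h

lemma L2F (g h : RForest Ω) (ts : RForest Ω)
    (IH : ∀ t ∈ ts, ∀ p ∈ leafPaths t, ∀ q ∈ leafPaths t, p ≠ q →
        graftAtF h (graftAtF g t p) q = graftAtF g (graftAtF h t q) p) :
    ∀ (i j : ℕ) (p' : List ℕ) (k : ℕ) (q' : List ℕ),
      (j :: p') ∈ leafPathsF i ts → (k :: q') ∈ leafPathsF i ts → (j :: p') ≠ (k :: q') →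
      gF h (gF g ts i j p') i k q' = gF g (gF h ts i k q') i j p' := by
  induction ts with
  | nil => intro i j p' k q' hp hq hne; simp [gF]
  | cons t ts ih =>
    intro i j p' k q' hp hq hne
    have IHtail : ∀ t' ∈ ts, ∀ p ∈ leafPaths t', ∀ q ∈ leafPaths t', p ≠ q →
        graftAtF h (graftAtF g t' p) q = graftAtF g (graftAtF h t' q) p :=
      fun t' ht' => IH t' (by simp [ht'])
    by_cases hj : j = i <;> by_cases hk : k = i
    · subst hj; subst hk
      simp only [gF, if_pos rfl, ↓reduceIte]
      rw [IH t (by simp) p' (mem_head hp) q' (mem_head hq)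
        (by intro hc; subst hc; exact hne rfl)]
    · subst hj
      simp only [gF, if_pos rfl, if_neg hk, ↓reduceIte]
    · subst hk
      simp only [gF, if_pos rfl, if_neg hj, ↓reduceIte]
    · simp only [gF, if_neg hj, if_neg hk]
      rw [ih IHtail (i+1) j p' k q' (mem_tail hj hp) (mem_tail hk hq) hne]

theorem L2T (g h : RForest Ω) : ∀ (t : RTree Ω), ∀ p ∈ leafPaths t, ∀ q ∈ leafPaths t,
    p ≠ q → graftAtF h (graftAtF g t p) q = graftAtF g (graftAtF h t q) p
  | RTree.node a [] => by
    intro p hp q hq hne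
    rw [leafPaths] at hp hq
    simp at hp hq
    subst hp; subst hq
    exact absurd rfl hne
  | RTree.node a (c :: cs) => by
    intro p hp q hq hne
    rw [leafPaths] at hp hq
    obtain ⟨j, p', rfl, -⟩ := head_bound (c :: cs) 0 p hp
    obtain ⟨k, q', rfl, -⟩ := head_bound (c :: cs) 0 q hq
    rw [graft_cons, graft_cons, graft_cons, graft_cons]
    exact congrArg _ (L2F g h (c :: cs) (fun t ht => L2T g h t) 0 j p' k q' hp hq hne)
termination_by t => sizeOf t
decreasing_by
  have := List.sizeOf_lt_of_mem ht
  simp_wf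
  simp only [List.cons.sizeOf_spec] at this
  omega

lemma L3F (g h : RForest Ω) (r : List ℕ) (ts : RForest Ω)
    (IH : ∀ t ∈ ts, ∀ p ∈ leafPaths t,
        graftAtF h (graftAtF g t p) (p ++ r) = graftAtF (fgraft h g r) t p) :
    ∀ (i j : ℕ) (p' : List ℕ), (j :: p') ∈ leafPathsF i ts →
      gF h (gF g ts i j p') i j (p' ++ r) = gF (fgraft h g r) ts i j p' := by
  induction ts with
  | nil => intro i j p' hp; simp [gF]
  | cons t ts ih =>
    intro i j p' hp
    by_cases hj : j = i
    · subst hj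
      simp only [gF, if_pos rfl, ↓reduceIte]
      rw [IH t (by simp) p' (mem_head hp)]
    · simp only [gF, if_neg hj]
      rw [ih (fun t' ht' => IH t' (by simp [ht'])) (i+1) j p' (mem_tail hj hp)]

theorem L3T (g h : RForest Ω) (r : List ℕ) : ∀ (t : RTree Ω), ∀ p ∈ leafPaths t,
    graftAtF h (graftAtF g t p) (p ++ r) = graftAtF (fgraft h g r) t p
  | RTree.node a [] => by
    intro p hp
    rw [leafPaths] at hp
    simp at hp
    subst hp
    cases r <;> rfl
  | RTree.node a (c :: cs) => by
    intro p hp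
    rw [leafPaths] at hp
    obtain ⟨j, p', rfl, -⟩ := head_bound (c :: cs) 0 p hp
    rw [List.cons_append, graft_cons, graft_cons, graft_cons]
    exact congrArg _ (L3F g h r (c :: cs) (fun t ht => L3T g h r t) 0 j p' hp)
termination_by t => sizeOf t
decreasing_by
  have := List.sizeOf_lt_of_mem ht
  simp_wf
  simp only [List.cons.sizeOf_spec] at this
  omega

lemma nodupF (ts : RForest Ω) (IH : ∀ t ∈ ts, (leafPaths t).Nodup) :
    ∀ i : ℕ, (leafPathsF i ts).Nodup := by
  induction ts with
  | nil => intro i; simp [leafPathsF]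
  | cons t ts ih =>
    intro i
    rw [leafPathsF]
    apply List.Nodup.append
    · exact (IH t (by simp)).map (fun p q hpq => by cases hpq; rfl)
    · exact ih (fun t' ht' => IH t' (by simp [ht'])) (i+1)
    · intro p hp hq
      obtain ⟨q', _, rfl⟩ := List.mem_map.1 hp
      obtain ⟨j', q'', he, hb⟩ := head_bound ts (i+1) _ hq
      cases he; omega

theorem nodupT : ∀ t : RTree Ω, (leafPaths t).Nodup
  | RTree.node a [] => by rw [leafPaths]; simp
  | RTree.node a (c :: cs) => by
    rw [leafPaths]
    exact nodupF (c :: cs) (fun t ht => nodupT t) 0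
termination_by t => sizeOf t
decreasing_by
  have := List.sizeOf_lt_of_mem ht
  simp_wf
  simp only [List.cons.sizeOf_spec] at this
  omega


section Sums
variable {α β M : Type*} [AddCommMonoid M]

lemma sum_map_add (l : List α) (f g : α → M) :
    (l.map fun a => f a + g a).sum = (l.map f).sum + (l.map g).sum := by
  induction l with
  | nil => simp
  | cons a l ih => simp [ih, add_add_add_comm]

lemma sum_swap (l : List α) (l' : List β) (f : α → β → M) :
    (l.map fun p => (l'.map (f p)).sum).sum
      = (l'.map fun q => (l.map fun p => f p q).sum).sum := by
  induction l with
  | nil => simp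
  | cons a l ih => simp [ih, sum_map_add]

lemma sum_flatMap (l : List α) (f : α → List β) (s : β → M) :
    ((l.flatMap f).map s).sum = (l.map fun a => ((f a).map s).sum).sum := by
  induction l with
  | nil => simp
  | cons a l ih => simp [ih]

lemma sum_pick [DecidableEq α] (l : List α) (hl : l.Nodup) {p : α} (hp : p ∈ l)
    (X : M) (Y : α → M) :
    (l.map fun q => if q = p then X else Y q).sum
      = X + (l.map fun q => if q = p then 0 else Y q).sum := by
  induction l with
  | nil => simp at hp
  | cons a l ih =>
    rw [List.nodup_cons] at hl
    rcases List.mem_cons.1 hp with rfl | hp'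
    · rw [List.map_cons, List.map_cons, if_pos rfl, if_pos rfl,
        List.map_congr_left (fun q hq => if_neg (fun hc : q = p => hl.1 (hc ▸ hq))),
        List.map_congr_left (fun q hq => if_neg (fun hc : q = p => hl.1 (hc ▸ hq))),
        List.sum_cons, List.sum_cons, zero_add]
    · have ha : a ≠ p := fun hc => hl.1 (hc ▸ hp')
      rw [List.map_cons, List.map_cons, if_neg ha, if_neg ha, List.sum_cons, List.sum_cons,
        ih hl.2 hp', add_left_comm]

end Sums


lemma lift_single (f : RForest Ω → FV Ω) (G : RForest Ω) :
    (Finsupp.lift (FV Ω) ℚ (RForest Ω)) f (Finsupp.single G 1) = f G := by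
  simp [Finsupp.lift_apply, Finsupp.sum_single_index]

lemma Lhd_single (F : RForest Ω) :
    Lhd (Finsupp.single F (1:ℚ)) = (Finsupp.lift (FV Ω) ℚ (RForest Ω)) (lhd F) := by
  rw [Lhd]
  simp [Finsupp.lift_apply, Finsupp.sum_single_index]

lemma Lhd_single_single (F G : RForest Ω) :
    Lhd (Finsupp.single F (1:ℚ)) (Finsupp.single G 1) = lhd F G := by
  rw [Lhd_single, lift_single]

lemma Lhd_empty (y : FV Ω) : Lhd (Finsupp.single ([] : RForest Ω) (1:ℚ)) y = y := by
  rw [Lhd_single]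
  have : lhd (Ω := Ω) [] = fun G => Finsupp.single G 1 := rfl
  rw [this]
  rw [Finsupp.lift_apply]
  have h2 : (fun (a : RForest Ω) (b : ℚ) => b • (Finsupp.single a 1 : FV Ω))
      = fun a b => Finsupp.single a b := by
    funext a b; rw [Finsupp.smul_single, smul_eq_mul, mul_one]
  rw [h2, Finsupp.sum_single]

lemma lhd_one (u : RTree Ω) (G : RForest Ω) :
    lhd [u] G = ((leafPaths u).map fun p => Finsupp.single [graftAtF G u p] (1:ℚ)).sum := rfl

lemma lhd_tree (F : RForest Ω) (hF : IsTree F) (G : RForest Ω) :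
    lhd F G = ((rootPaths F).map fun r => Finsupp.single (fgraft G F r) (1:ℚ)).sum := by
  match F with
  | [] =>
    show Finsupp.single G 1 = _
    rw [rootPaths]
    simp [fgraft]
  | [u] =>
    rw [lhd_one, rootPaths]
    show _ = ((((leafPaths u).map fun p => 0 :: p) ++ leafPathsF 1 []).map
      fun r => Finsupp.single (fgraft G [u] r) (1:ℚ)).sum
    rw [show leafPathsF 1 ([] : RForest Ω) = [] from rfl, List.append_nil, List.map_map]
    congr 1
  | t :: t' :: ts => simp [IsTree] at hF

lemma Lhd_sum_right {α : Type} (x : FV Ω) (l : List α) (σ : α → RForest Ω) :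
    Lhd x ((l.map fun a => Finsupp.single (σ a) (1:ℚ)).sum)
      = (l.map fun a => Lhd x (Finsupp.single (σ a) 1)).sum := by
  rw [map_list_sum (Lhd x), List.map_map]
  rfl

lemma Lhd_sum_left {α : Type} (y : FV Ω) (l : List α) (σ : α → RForest Ω) :
    Lhd ((l.map fun a => Finsupp.single (σ a) (1:ℚ)).sum) y
      = (l.map fun a => Lhd (Finsupp.single (σ a) 1) y).sum := by
  induction l with
  | nil => simp
  | cons a l ih => simp [map_add, ih]


lemma key (u : RTree Ω) (g h : RForest Ω) (hg : IsTree g) :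
    Lhd (Lhd (Finsupp.single [u] (1:ℚ)) (Finsupp.single g 1)) (Finsupp.single h 1)
      - Lhd (Finsupp.single [u] 1) (Lhd (Finsupp.single g 1) (Finsupp.single h 1))
    = ((leafPaths u).map fun p => ((leafPaths u).map fun q =>
        if q = p then 0 else Finsupp.single [graftAtF h (graftAtF g u p) q] (1:ℚ)).sum).sum := by
  have hterm1 : Lhd (Lhd (Finsupp.single [u] (1:ℚ)) (Finsupp.single g 1)) (Finsupp.single h 1)
      = ((leafPaths u).map fun p =>
          (((rootPaths g).map fun r =>
              Finsupp.single [graftAtF (fgraft h g r) u p] (1:ℚ)).sum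
          + ((leafPaths u).map fun q => if q = p then 0
              else Finsupp.single [graftAtF h (graftAtF g u p) q] (1:ℚ)).sum)).sum := by
    rw [Lhd_single_single, lhd_one, Lhd_sum_left]
    apply congrArg
    apply List.map_congr_left
    intro p hp
    rw [Lhd_single_single, lhd_one, L1T g u p hp, sum_flatMap]
    have inner : ∀ q ∈ leafPaths u,
        ((RepB g p q).map fun x => Finsupp.single [graftAtF h (graftAtF g u p) x] (1:ℚ)).sum
        = if q = p
          then ((rootPaths g).map fun r =>
              Finsupp.single [graftAtF (fgraft h g r) u p] (1:ℚ)).sum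
          else Finsupp.single [graftAtF h (graftAtF g u p) q] (1:ℚ) := by
      intro q hq
      by_cases hqp : q = p
      · subst hqp
        rw [if_pos rfl]
        unfold RepB
        rw [if_pos rfl, List.map_map]
        apply congrArg
        apply List.map_congr_left
        intro r _
        show Finsupp.single [graftAtF h (graftAtF g u q) (q ++ r)] (1:ℚ) = _
        rw [L3T g h r u q hq]
      · rw [if_neg hqp]
        unfold RepB
        rw [if_neg hqp]
        simp
    rw [List.map_congr_left inner,
      sum_pick (leafPaths u) (nodupT u) hp
        (((rootPaths g).map fun r =>
            Finsupp.single [graftAtF (fgraft h g r) u p] (1:ℚ)).sum)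
        (fun q => Finsupp.single [graftAtF h (graftAtF g u p) q] (1:ℚ))]
  have hterm2 : Lhd (Finsupp.single [u] (1:ℚ)) (Lhd (Finsupp.single g 1) (Finsupp.single h 1))
      = ((leafPaths u).map fun p =>
          (((rootPaths g).map fun r =>
              Finsupp.single [graftAtF (fgraft h g r) u p] (1:ℚ)).sum)).sum := by
    rw [Lhd_single_single g h, lhd_tree g hg h, Lhd_sum_right,
      List.map_congr_left (fun r _ => by rw [Lhd_single_single, lhd_one])]
    exact sum_swap _ _ _
  rw [hterm1, hterm2, sum_map_add, add_sub_cancel_left]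

end PreLieAux

/-- the grafting product `◁` (sum over the leaves of `t₁` of the
graftings of `t₂`) is left pre-Lie:
`(t₁◁t₂)◁t₃ − t₁◁(t₂◁t₃) = (t₁◁t₃)◁t₂ − t₁◁(t₃◁t₂)` for all trees. -/
theorem lhd_preLie {Ω : Type} :
    ∀ t₁ t₂ t₃ : RForest Ω, IsTree t₁ → IsTree t₂ → IsTree t₃ →
      Lhd (Lhd (Finsupp.single t₁ 1) (Finsupp.single t₂ 1)) (Finsupp.single t₃ 1)
          - Lhd (Finsupp.single t₁ 1) (Lhd (Finsupp.single t₂ 1) (Finsupp.single t₃ 1))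
        = Lhd (Lhd (Finsupp.single t₁ 1) (Finsupp.single t₃ 1)) (Finsupp.single t₂ 1)
          - Lhd (Finsupp.single t₁ 1) (Lhd (Finsupp.single t₃ 1) (Finsupp.single t₂ 1)) := by
  intro t₁ t₂ t₃ h₁ h₂ h₃
  match t₁, h₁ with
  | [], _ =>
    rw [PreLieAux.Lhd_empty, PreLieAux.Lhd_empty, PreLieAux.Lhd_empty, PreLieAux.Lhd_empty,
      sub_self, sub_self]
  | [u], _ =>
    rw [PreLieAux.key u t₂ t₃ h₂, PreLieAux.key u t₃ t₂ h₃]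
    refine Eq.trans (PreLieAux.sum_swap (leafPaths u) (leafPaths u)
      (fun p q => if q = p then 0 else Finsupp.single [graftAtF t₃ (graftAtF t₂ u p) q] (1:ℚ))) ?_
    apply congrArg
    apply List.map_congr_left
    intro p hp
    apply congrArg
    apply List.map_congr_left
    intro q hq
    by_cases hpq : q = p
    · subst hpq
      rw [if_pos rfl, if_pos rfl]
    · rw [if_neg (fun hc : p = q => hpq hc.symm), if_neg hpq,
        PreLieAux.L2T t₂ t₃ u q hq p hp hpq]
  | t :: t' :: ts, h₁ => simp [IsTree] at h₁
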